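/- Under the hypotheses of the dictatorship theorem, if the agenda contains a minimally inconsistent set of size at least 3, all decisive-coalition families 𝒰_Φ coincide with a common family 𝒰, and 𝒰 is monotone, then 𝒰 is closed under binary intersection: A ∈ 𝒰 and B ∈ 𝒰 imply A ∩ B ∈ 𝒰. -/
import Mathlib


inductive MF : Type
  | var : MF
  | neg : MF → MF
  | box : MF → MF
  | dia : MF → MF

def Sat {W : Type} (R : W → W → Prop) (V : Set W) : W → MF → Prop
  | w, MF.var => w ∈ V
  | w, MF.neg φ => ¬ Sat R V w φ
  | w, MF.box φ => ∀ w', R w w' → Sat R V w' φ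
  | w, MF.dia φ => ∃ w', R w w' ∧ Sat R V w' φ

/-- `Δ` is consistent: some valuation makes all its formulas true at `w₀`. -/
def Consistent {W : Type} (R : W → W → Prop) (w₀ : W) (Δ : Set MF) : Prop :=
  ∃ V : Set W, ∀ Φ ∈ Δ, Sat R V w₀ Φ

/-- `Δ` is a rational judgment set: a complete and consistent subset of the agenda `Γ`. -/
def Rational {W : Type} (R : W → W → Prop) (w₀ : W) (Γ Δ : Set MF) : Prop :=
  Δ ⊆ Γ ∧ (∀ Φ ∈ Γ, Φ ∈ Δ ∨ MF.neg Φ ∈ Δ) ∧ Consistent R w₀ Δ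

/-- `Δ` is minimally inconsistent: a subset of `Δ` is inconsistent iff it equals `Δ`. -/
def MinInconsistent {W : Type} (R : W → W → Prop) (w₀ : W) (Δ : Set MF) : Prop :=
  ∀ Δ₀ ⊆ Δ, (¬ Consistent R w₀ Δ₀ ↔ Δ₀ = Δ)

/-- A modal formula contains no negation operator. -/
def NegFree : MF → Prop
  | MF.var => True
  | MF.neg _ => False
  | MF.box φ => NegFree φ
  | MF.dia φ => NegFree φ

/-- The relation `Φ <₀ Ψ`: some `Γ₀ ⊆ Γ` makes `Γ₀ ∪ {Φ, ¬Ψ}` minimally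
inconsistent while `Γ₀ ∪ {¬Φ, Ψ}` is consistent. -/
def Lt0 {W : Type} (R : W → W → Prop) (w₀ : W) (Γ : Set MF) (Φ Ψ : MF) : Prop :=
  ∃ Γ₀ ⊆ Γ, MinInconsistent R w₀ (Γ₀ ∪ {Φ, MF.neg Ψ}) ∧
    Consistent R w₀ (Γ₀ ∪ {MF.neg Φ, Ψ})

/-- Coalition `A` is decisive for `Φ` under `F`. -/
def Decisive {W N : Type} (R : W → W → Prop) (w₀ : W) (Γ : Set MF)
    (F : (N → Set MF) → Set MF) (Φ : MF) (A : Set N) : Prop :=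
  ∀ f : N → Set MF, (∀ i, Rational R w₀ Γ (f i)) → {i | Φ ∈ f i} = A → Φ ∈ F f

lemma consistent_mono {W : Type} (R : W → W → Prop) (w₀ : W) {Δ Δ' : Set MF}
    (h : Δ ⊆ Δ') (hc : Consistent R w₀ Δ') : Consistent R w₀ Δ := by
  obtain ⟨V, hV⟩ := hc
  exact ⟨V, fun Φ hΦ => hV Φ (h hΦ)⟩

lemma not_both {W : Type} {R : W → W → Prop} {w₀ : W} {Δ : Set MF}
    (h : Consistent R w₀ Δ) {Φ : MF} (h1 : Φ ∈ Δ) (h2 : MF.neg Φ ∈ Δ) : False := by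
  obtain ⟨V, hV⟩ := h
  exact (hV _ h2) (hV _ h1)

theorem stmt18 {W N : Type} [Fintype N] (hN : 2 ≤ Fintype.card N)
    (R : W → W → Prop) (w₀ : W) (Γ : Set MF)
    (hneg : ∀ Φ ∈ Γ, MF.neg Φ ∈ Γ)
    (hext : ∀ Γ₀ ⊆ Γ, Consistent R w₀ Γ₀ → ∃ Γ₁, Γ₀ ⊆ Γ₁ ∧ Rational R w₀ Γ Γ₁)
    (hminconn : ∃ Γ₀ ⊆ Γ, (∃ Φ₁ Φ₂ Φ₃ : MF, Φ₁ ∈ Γ₀ ∧ Φ₂ ∈ Γ₀ ∧ Φ₃ ∈ Γ₀ ∧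
        Φ₁ ≠ Φ₂ ∧ Φ₁ ≠ Φ₃ ∧ Φ₂ ≠ Φ₃) ∧ MinInconsistent R w₀ Γ₀)
    (F : (N → Set MF) → Set MF)
    (hF : ∀ f : N → Set MF, (∀ i, Rational R w₀ Γ (f i)) → Rational R w₀ Γ (F f))
    (hUna : ∀ f : N → Set MF, (∀ i, Rational R w₀ Γ (f i)) →
      ∀ Φ ∈ Γ, (∀ i, Φ ∈ f i) → Φ ∈ F f)
    (hPNN : ∀ f g : N → Set MF, (∀ i, Rational R w₀ Γ (f i)) →
      (∀ i, Rational R w₀ Γ (g i)) → ∀ Φ ∈ Γ,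
      {i | Φ ∈ f i} = {i | MF.neg Φ ∈ g i} → (Φ ∈ F f ↔ MF.neg Φ ∈ F g))
    (U : Set (Set N))
    -- all decisive-coalition families coincide with the common family U
    (hU : ∀ Φ ∈ Γ, {A : Set N | Decisive R w₀ Γ F Φ A} = U)
    -- U is monotone (upward closed)
    (hmono : ∀ A B : Set N, A ∈ U → A ⊆ B → B ∈ U) :
    ∀ A B : Set N, A ∈ U → B ∈ U → A ∩ B ∈ U := by
  classical
  intro A B hA hB
  obtain ⟨Γ₀, hΓ₀Γ, ⟨Φ₁, Φ₂, Φ₃, h1, h2, h3, h12, h13, h23⟩, hmin⟩ := hminconn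
  have hΓ₀incons : ¬ Consistent R w₀ Γ₀ := (hmin Γ₀ subset_rfl).mpr rfl
  have hdel : ∀ Φ ∈ Γ₀, Consistent R w₀ (Γ₀ \ {Φ}) := by
    intro Φ hΦ
    by_contra hc
    have heq := (hmin _ Set.diff_subset).mp hc
    have : Φ ∈ Γ₀ \ {Φ} := by rw [heq]; exact hΦ
    exact this.2 rfl
  have hextj : ∀ Φ ∈ Γ₀, ∃ Δ, Rational R w₀ Γ Δ ∧ (∀ Ψ ∈ Γ₀, Ψ ≠ Φ → Ψ ∈ Δ) ∧
      Φ ∉ Δ ∧ MF.neg Φ ∈ Δ := by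
    intro Φ hΦ
    obtain ⟨Δ, hsub, hrat⟩ := hext (Γ₀ \ {Φ}) (fun x hx => hΓ₀Γ hx.1) (hdel Φ hΦ)
    have hmem : ∀ Ψ ∈ Γ₀, Ψ ≠ Φ → Ψ ∈ Δ := fun Ψ hΨ hne => hsub ⟨hΨ, hne⟩
    have hnot : Φ ∉ Δ := by
      intro hin
      have hss : Γ₀ ⊆ Δ := by
        intro Ψ hΨ
        by_cases h : Ψ = Φ
        · exact h ▸ hin
        · exact hmem Ψ hΨ h
      exact hΓ₀incons (consistent_mono R w₀ hss hrat.2.2)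
    exact ⟨Δ, hrat, hmem, hnot, (hrat.2.1 Φ (hΓ₀Γ hΦ)).resolve_left hnot⟩
  obtain ⟨Δ₁, hr1, hm1, hn1, hneg1⟩ := hextj Φ₁ h1
  obtain ⟨Δ₂, hr2, hm2, hn2, hneg2⟩ := hextj Φ₂ h2
  obtain ⟨Δ₃, hr3, hm3, hn3, hneg3⟩ := hextj Φ₃ h3
  set f : N → Set MF := fun i => if i ∈ A ∩ B then Δ₃ else if i ∈ A then Δ₂ else Δ₁ with hf
  have hfrat : ∀ i, Rational R w₀ Γ (f i) := by
    intro i; simp only [hf]; split_ifs <;> assumption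
  have hdec : ∀ Φ ∈ Γ, ∀ C ∈ U, Decisive R w₀ Γ F Φ C := by
    intro Φ hΦ C hC
    rw [← hU Φ hΦ] at hC
    exact hC
  have hset1 : {i | Φ₁ ∈ f i} = A := by
    ext i
    simp only [hf, Set.mem_setOf_eq]
    by_cases hiAB : i ∈ A ∩ B
    · simp [hiAB, hm3 Φ₁ h1 h13, hiAB.1]
    · by_cases hiA : i ∈ A
      · simp [hiAB, hiA, hm2 Φ₁ h1 h12]
      · simp [hiAB, hiA, hn1]
  have hset2 : {i | Φ₂ ∈ f i} = (A ∩ B) ∪ Aᶜ := by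
    ext i
    simp only [hf, Set.mem_setOf_eq, Set.mem_union, Set.mem_compl_iff]
    by_cases hiAB : i ∈ A ∩ B
    · simp [hiAB, hm3 Φ₂ h2 h23]
    · by_cases hiA : i ∈ A
      · simp [hiAB, hiA, hn2]
      · simp [hiAB, hiA, hm1 Φ₂ h2 (Ne.symm h12)]
  have hsetn3 : {i | MF.neg Φ₃ ∈ f i} = A ∩ B := by
    ext i
    simp only [hf, Set.mem_setOf_eq]
    by_cases hiAB : i ∈ A ∩ B
    · simp [hiAB, hneg3]
    · by_cases hiA : i ∈ A
      · rw [if_neg hiAB, if_pos hiA]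
        exact iff_of_false (fun hc => not_both hr2.2.2 (hm2 Φ₃ h3 (Ne.symm h23)) hc) hiAB
      · rw [if_neg hiAB, if_neg hiA]
        exact iff_of_false (fun hc => not_both hr1.2.2 (hm1 Φ₃ h3 (Ne.symm h13)) hc) hiAB
  have hFf1 : Φ₁ ∈ F f := hdec Φ₁ (hΓ₀Γ h1) A hA f hfrat hset1
  have hUmem2 : (A ∩ B) ∪ Aᶜ ∈ U := by
    apply hmono B _ hB
    intro i hi
    by_cases hiA : i ∈ A
    · exact Or.inl ⟨hiA, hi⟩
    · exact Or.inr hiA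
  have hFf2 : Φ₂ ∈ F f := hdec Φ₂ (hΓ₀Γ h2) _ hUmem2 f hfrat hset2
  have hsub3 : ∀ Ψ ∈ Γ₀, Ψ ≠ Φ₃ → Ψ ∈ F f := by
    intro Ψ hΨ hne
    by_cases e1 : Ψ = Φ₁
    · exact e1 ▸ hFf1
    by_cases e2 : Ψ = Φ₂
    · exact e2 ▸ hFf2
    apply hUna f hfrat Ψ (hΓ₀Γ hΨ)
    intro i
    simp only [hf]
    split_ifs
    · exact hm3 Ψ hΨ hne
    · exact hm2 Ψ hΨ e2
    · exact hm1 Ψ hΨ e1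
  have hFrat := hF f hfrat
  have hn3F : Φ₃ ∉ F f := by
    intro hin
    apply hΓ₀incons
    apply consistent_mono R w₀ _ hFrat.2.2
    intro Ψ hΨ
    by_cases h : Ψ = Φ₃
    · exact h ▸ hin
    · exact hsub3 Ψ hΨ h
  have hnegF : MF.neg Φ₃ ∈ F f := (hFrat.2.1 Φ₃ (hΓ₀Γ h3)).resolve_left hn3F
  have hnegΓ : MF.neg Φ₃ ∈ Γ := hneg Φ₃ (hΓ₀Γ h3)
  have hnnΓ : MF.neg (MF.neg Φ₃) ∈ Γ := hneg _ hnegΓ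
  -- rational set containing ¬¬Φ₃
  have hconsnn : Consistent R w₀ ({MF.neg (MF.neg Φ₃)} : Set MF) := by
    obtain ⟨V, hV⟩ := hdel Φ₁ h1
    refine ⟨V, fun Φ hΦ => ?_⟩
    rw [Set.mem_singleton_iff] at hΦ
    subst hΦ
    exact fun hc => hc (hV Φ₃ ⟨h3, fun e => h13 (by simpa using e.symm)⟩)
  obtain ⟨Δp, hpsub, hprat⟩ := hext {MF.neg (MF.neg Φ₃)}
    (by intro Φ hΦ; rw [Set.mem_singleton_iff] at hΦ; subst hΦ; exact hnnΓ) hconsnn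
  have hpmem : MF.neg (MF.neg Φ₃) ∈ Δp := hpsub rfl
  -- rational set containing ¬Φ₃ (and not ¬¬Φ₃)
  have hconsn : Consistent R w₀ ({MF.neg Φ₃} : Set MF) := by
    obtain ⟨V, hV⟩ := hr3.2.2
    refine ⟨V, fun Φ hΦ => ?_⟩
    rw [Set.mem_singleton_iff] at hΦ
    subst hΦ
    exact hV _ hneg3
  obtain ⟨Δq, hqsub, hqrat⟩ := hext {MF.neg Φ₃}
    (by intro Φ hΦ; rw [Set.mem_singleton_iff] at hΦ; subst hΦ; exact hnegΓ) hconsn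
  have hqmem : MF.neg Φ₃ ∈ Δq := hqsub rfl
  have hqnot : MF.neg (MF.neg Φ₃) ∉ Δq := fun hc => not_both hqrat.2.2 hqmem hc
  -- conclude
  rw [← hU (MF.neg Φ₃) hnegΓ]
  intro g hg hgset
  set h : N → Set MF := fun i => if i ∈ A ∩ B then Δp else Δq with hh
  have hhrat : ∀ i, Rational R w₀ Γ (h i) := by
    intro i; simp only [hh]; split_ifs <;> assumption
  have hseth : {i | MF.neg (MF.neg Φ₃) ∈ h i} = A ∩ B := by
    ext i
    simp only [hh, Set.mem_setOf_eq]
    by_cases hiAB : i ∈ A ∩ B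
    · simp [hiAB, hpmem]
    · simp [hiAB, hqnot]
  have e1 := hPNN f h hfrat hhrat (MF.neg Φ₃) hnegΓ (hsetn3.trans hseth.symm)
  have e2 := hPNN g h hg hhrat (MF.neg Φ₃) hnegΓ (hgset.trans hseth.symm)
  exact e2.mpr (e1.mp hnegF)
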